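/- Let A be a set of n agents, each with a nonnegative monotone submodular valuation v_i on a finite ground set G with v_i(∅) = 0, and let V_i be the multilinear extension of v_i. Let τ : A → G be an injection maximizing ∏_{i∈A} v_i({τ(i)}) over all injections from A to G, with v_i({τ(i)}) > 0 for every i; set H = τ(A) and G' = G ∖ H. Let c > 0. For each agent i, let L_i ⊆ G', S_i ⊆ G' ∖ L_i, and y_i ∈ [0,1]^{G'} (extended by 0 on H) with ∑_{j∈L_i} y_{ij} ≤ c + 1; set y_i^{(s)} = y_i^{(L_i)} + 1_{S_i}. Suppose there exist an injection π : A → H and K > 0 with (∏_{i∈A} V_i(y_i^{(s)} + 1_{π(i)}))^{1/n} ≥ K. Then there exists a partial matching ρ, assigning distinct items of H to some of the agents, such that (∏_{i∈A} v_i(S_i ∪ {ρ(i)}))^{1/n} ≥ K/((c+3)(c+4)), where {ρ(i)} = ∅ if i is assigned no item. -/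

import Mathlib

open Finset

/-- A set function `v` on a finite ground set is submodular if
`v(S ∩ T) + v(S ∪ T) ≤ v(S) + v(T)` for all `S, T`. -/
def Submodular {G : Type*} [DecidableEq G] (v : Finset G → ℝ) : Prop :=
  ∀ S T : Finset G, v (S ∩ T) + v (S ∪ T) ≤ v S + v T

/-- The multilinear extension of a set function `v` on a finite ground set `G`. -/
noncomputable def multilinear {G : Type*} [Fintype G] [DecidableEq G]
    (v : Finset G → ℝ) (x : G → ℝ) : ℝ :=
  ∑ S : Finset G, v S * ((∏ j ∈ S, x j) * ∏ j ∈ Sᶜ, (1 - x j))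

/-- The indicator vector of a finite set `S`. -/
def indVec {G : Type*} [DecidableEq G] (S : Finset G) : G → ℝ :=
  fun j => if j ∈ S then 1 else 0

/-- `x^{(S)}`: the vector equal to `x` on coordinates in `S` and `0` elsewhere. -/
def restr {G : Type*} [DecidableEq G] (x : G → ℝ) (S : Finset G) : G → ℝ :=
  fun j => if j ∈ S then x j else 0

/-- The (at most singleton) finset associated to an optional item. -/
def optSet {G : Type*} : Option G → Finset G
  | none => ∅
  | some g => {g}

/-!
Each agent's multilinear value is at most `v(S_i) + v({π i}) + (c + 1) v({b_i})`, with `b_i` a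
best single item of `L_i`, hence at most `c + 3` times the largest of the three terms. Let `U` be
the agents whose largest term is `v({b_i})`, and write `π = τ ∘ φ`. Every agent of `U` keeps
`τ i`; an agent preferring `π i` to `S_i` alone gets `π i`, unless its `φ`-path through such
agents runs into some `e ∈ U`, in which case it keeps `τ i` as well. Moving such a path one step
along `φ` and giving `e` the item `b_e ∉ τ(A)` is again an injection, so by optimality of `τ` the
fallback loses nothing against the largest terms. This gives the bound with `c + 3` in place of
`(c + 3)(c + 4)`.
-/

namespace Multilinear

variable {G : Type*} [Fintype G] [DecidableEq G]

/-- The probability of the set `R` when each `j` is included independently with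
probability `x j`. -/
def weight (x : G → ℝ) (R : Finset G) : ℝ :=
  (∏ j ∈ R, x j) * ∏ j ∈ Rᶜ, (1 - x j)

lemma weight_nonneg {x : G → ℝ} (hx : ∀ j, 0 ≤ x j ∧ x j ≤ 1) (R : Finset G) :
    0 ≤ weight x R :=
  mul_nonneg (prod_nonneg fun j _ => (hx j).1) (prod_nonneg fun j _ => sub_nonneg.2 (hx j).2)

lemma sum_weight (x : G → ℝ) : ∑ R, weight x R = 1 := by
  simpa [weight] using (Fintype.prod_add x (fun j => 1 - x j)).symm

lemma sum_weight_of_mem (x : G → ℝ) (j : G) :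
    ∑ R, (if j ∈ R then weight x R else 0) = x j := by
  have h := Fintype.prod_add x (fun k => if k = j then 0 else 1 - x k)
  rw [Fintype.prod_eq_single j fun k hk => by simp [hk]] at h
  simp only [if_pos, add_zero] at h
  rw [h]
  refine sum_congr rfl fun R _ => ?_
  split_ifs with hj
  · refine congrArg _ (prod_congr rfl fun k hk => ?_)
    rw [if_neg (by rintro rfl; exact mem_compl.1 hk hj)]
  · rw [prod_eq_zero (mem_compl.2 hj) (by simp), mul_zero]

end Multilinear

lemma Submodular.le_add_sum_singleton {G : Type*} [DecidableEq G] {v : Finset G → ℝ}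
    (hsub : Submodular v) (hnn : ∀ S, 0 ≤ v S) (Q R : Finset G) :
    v (Q ∪ R) ≤ v Q + ∑ j ∈ R, v {j} := by
  induction R using Finset.induction_on with
  | empty => simp
  | insert a R ha ih =>
    have h := hsub (Q ∪ R) {a}
    rw [union_insert, insert_eq, union_comm {a}, sum_insert ha]
    linarith [hnn ((Q ∪ R) ∩ {a})]

/-- Each set `R` is bounded by `Q` plus the singletons of `R \ Q`; averaging over `R` gives the
bound on the multilinear extension. -/
lemma multilinear_le_add_sum {G : Type*} [Fintype G] [DecidableEq G] {v : Finset G → ℝ}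
    (hnn : ∀ S, 0 ≤ v S) (hmono : Monotone v) (hsub : Submodular v) {x : G → ℝ}
    (hx : ∀ j, 0 ≤ x j ∧ x j ≤ 1) (Q : Finset G) :
    multilinear v x ≤ v Q + ∑ j ∈ Qᶜ, x j * v {j} := by
  have hR : ∀ R, v R ≤ v Q + ∑ j ∈ Qᶜ, if j ∈ R then v {j} else 0 := fun R =>
    calc v R ≤ v (Q ∪ R \ Q) := hmono (by simp)
      _ ≤ v Q + ∑ j ∈ R \ Q, v {j} := hsub.le_add_sum_singleton hnn Q _
      _ = v Q + ∑ j ∈ Qᶜ, if j ∈ R then v {j} else 0 := by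
        rw [sum_ite_mem, inter_comm, sdiff_eq_inter_compl]
  calc multilinear v x
      ≤ ∑ R, (v Q + ∑ j ∈ Qᶜ, if j ∈ R then v {j} else 0) * Multilinear.weight x R :=
        sum_le_sum fun R _ => mul_le_mul_of_nonneg_right (hR R) (Multilinear.weight_nonneg hx R)
    _ = v Q + ∑ j ∈ Qᶜ, x j * v {j} := by
        simp only [add_mul, sum_add_distrib, ← mul_sum, Multilinear.sum_weight, mul_one, sum_mul,
          ite_mul, zero_mul]
        rw [sum_comm]
        refine congrArg _ (sum_congr rfl fun j _ => ?_)
        rw [← Multilinear.sum_weight_of_mem x j, sum_mul]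
        exact sum_congr rfl fun R _ => by split_ifs <;> ring

lemma rpow_one_div_le_mul_rpow {X Y C : ℝ} {n : ℕ} (hX : 0 ≤ X) (hY : 0 ≤ Y) (hC : 1 ≤ C)
    (h : X ≤ C ^ n * Y) : X ^ ((1 : ℝ) / n) ≤ C * Y ^ ((1 : ℝ) / n) := by
  rcases eq_or_ne n 0 with rfl | hn
  · simpa using hC
  calc X ^ ((1 : ℝ) / n) ≤ (C ^ n * Y) ^ ((1 : ℝ) / n) :=
        Real.rpow_le_rpow hX h (by positivity)
    _ = C * Y ^ ((1 : ℝ) / n) := by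
        rw [Real.mul_rpow (by positivity) hY, one_div, Real.pow_rpow_inv_natCast (by linarith) hn]

lemma div_le_rpow_one_div_of_le_pow_mul {X Y C D K : ℝ} {n : ℕ} (hX : 0 ≤ X) (hY : 0 ≤ Y)
    (hC : 1 ≤ C) (hCD : C ≤ D) (h : X ≤ C ^ n * Y) (hK : K ≤ X ^ ((1 : ℝ) / n)) :
    K / D ≤ Y ^ ((1 : ℝ) / n) := by
  have hroot := hK.trans (rpow_one_div_le_mul_rpow hX hY hC h)
  have hY' := Real.rpow_nonneg hY ((1 : ℝ) / n)
  rw [div_le_iff₀ (by linarith)]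
  nlinarith

section Exchange

variable {A G : Type*} [Fintype A] [DecidableEq A] {f : A → G → ℝ} {τ : A → G}

lemma prod_le_prod_of_eq_off_of_optimal
    (hτmax : ∀ σ : A → G, Function.Injective σ → ∏ i, f i (σ i) ≤ ∏ i, f i (τ i))
    (hτpos : ∀ i, 0 < f i (τ i)) {σ : A → G} (hσ : Function.Injective σ) {B : Finset A}
    (hB : ∀ i ∉ B, σ i = τ i) : ∏ i ∈ B, f i (σ i) ≤ ∏ i ∈ B, f i (τ i) := by
  have h := hτmax σ hσ
  rw [← prod_mul_prod_compl B, ← prod_mul_prod_compl B (fun i => f i (τ i)),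
    prod_congr (s₁ := Bᶜ) rfl fun i hi => by rw [hB i (mem_compl.1 hi)]] at h
  exact le_of_mul_le_mul_right h (prod_pos fun i _ => hτpos i)

lemma prod_mul_le_of_optimal (hτ : Function.Injective τ)
    (hτmax : ∀ σ : A → G, Function.Injective σ → ∏ i, f i (σ i) ≤ ∏ i, f i (τ i))
    (hτpos : ∀ i, 0 < f i (τ i)) {φ : A → A} (hφ : Function.Injective φ) {C : Finset A}
    {e : A} (he : e ∉ C) (hC : ∀ x ∈ C, φ x ∈ C ∨ φ x = e) {g : G} (hg : g ∉ Set.range τ) :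
    (∏ x ∈ C, f x (τ (φ x))) * f e g ≤ (∏ x ∈ C, f x (τ x)) * f e (τ e) := by
  set σ : A → G := fun x => if x = e then g else if x ∈ C then τ (φ x) else τ x
  have hleave : ∀ x ∈ C, ∀ y ∉ C, y ≠ e → φ x ≠ y := fun x hx y hy hye hxy =>
    (hC x hx).elim (fun h => hy (hxy ▸ h)) (fun h => hye (hxy ▸ h))
  have hσ : Function.Injective σ := by
    intro x y hxy
    by_cases hx : x = e <;> by_cases hy : y = e <;>
      simp only [σ, hx, hy, if_true, if_false] at hxy
    · exact hx.trans hy.symm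
    · split_ifs at hxy <;> exact absurd ⟨_, hxy.symm⟩ hg
    · split_ifs at hxy <;> exact absurd ⟨_, hxy⟩ hg
    · split_ifs at hxy with hxC hyC hyC
      · exact hφ (hτ hxy)
      · exact absurd (hτ hxy) (hleave x hxC y hyC hy)
      · exact absurd (hτ hxy).symm (hleave y hyC x hxC hx)
      · exact hτ hxy
  have h := prod_le_prod_of_eq_off_of_optimal hτmax hτpos hσ (B := insert e C) fun i hi => by
    rw [mem_insert, not_or] at hi
    simp [σ, hi.1, hi.2]
  have hσC : ∀ x ∈ C, σ x = τ (φ x) := fun x hx => by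
    simp [σ, ne_of_mem_of_not_mem hx he, hx]
  rw [prod_insert he, prod_insert he, prod_congr rfl fun x hx => by rw [hσC x hx]] at h
  simpa [σ, mul_comm] using h

end Exchange

section Chains

variable {A : Type*} {φ : A → A} {P : Finset A} {e : A}

/-- `ReachesVia φ P e d`: the `φ`-orbit of `d` stays in `P` until it hits `e`. -/
inductive ReachesVia (φ : A → A) (P : Finset A) (e : A) : A → Prop
  | last {d : A} : d ∈ P → φ d = e → ReachesVia φ P e d
  | cons {d : A} : d ∈ P → ReachesVia φ P e (φ d) → ReachesVia φ P e d

lemma ReachesVia.mem {d : A} (h : ReachesVia φ P e d) : d ∈ P := by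
  cases h <;> assumption

lemma ReachesVia.eq_of_notMem {e' d : A} (h : ReachesVia φ P e d) (h' : ReachesVia φ P e' d)
    (he : e ∉ P) (he' : e' ∉ P) : e = e' := by
  induction h with
  | last _ hde =>
    cases h' with
    | last _ hde' => exact hde.symm.trans hde'
    | cons _ h' => exact absurd (hde ▸ h'.mem) he
  | cons _ hφd ih =>
    cases h' with
    | last _ hde' => exact absurd (hde' ▸ hφd.mem) he'
    | cons _ h' => exact ih h'

end Chains

lemma injOn_ite_of_apply_mem {A : Type*} [DecidableEq A] {φ : A → A}
    (hφ : Function.Injective φ) {T B : Finset A} (hT : ∀ x ∈ T, φ x ∈ B → φ x ∈ T) :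
    Set.InjOn (fun x => if x ∈ T then φ x else x) B := by
  intro x hx y hy hxy
  by_cases hxT : x ∈ T <;> by_cases hyT : y ∈ T <;>
    simp only [hxT, hyT, if_true, if_false] at hxy
  · exact hφ hxy
  · exact absurd (hxy ▸ hT x hxT (hxy ▸ hy)) hyT
  · exact absurd (hxy ▸ hT y hyT (hxy.symm ▸ hx)) hxT
  · exact hxy

lemma exists_injOn_prod_le {A G : Type*} [Fintype A] [DecidableEq A] {f : A → G → ℝ}
    (hf : ∀ i g, 0 ≤ f i g) {τ : A → G} (hτ : Function.Injective τ)
    (hτmax : ∀ σ : A → G, Function.Injective σ → ∏ i, f i (σ i) ≤ ∏ i, f i (τ i))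
    (hτpos : ∀ i, 0 < f i (τ i)) {φ : A → A} (hφ : Function.Injective φ) {P U : Finset A}
    (hPU : Disjoint P U) {b : A → G} (hb : ∀ e ∈ U, b e ∉ Set.range τ) :
    ∃ κ : A → A, Set.InjOn κ ↑(P ∪ U) ∧
      (∏ i ∈ P, f i (τ (φ i))) * ∏ i ∈ U, f i (b i) ≤ ∏ i ∈ P ∪ U, f i (τ (κ i)) := by
  classical
  set chain : A → Finset A := fun e => univ.filter (ReachesVia φ P e)
  set D := U.biUnion chain
  have hUP : ∀ e ∈ U, e ∉ P := fun e he hP => disjoint_left.1 hPU hP he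
  have hDP : D ⊆ P := biUnion_subset.2 fun e _ d hd => (mem_filter.1 hd).2.mem
  have hdisj : (U : Set A).PairwiseDisjoint chain := fun e he e' he' hne =>
    disjoint_left.2 fun d hd hd' =>
      hne ((mem_filter.1 hd).2.eq_of_notMem (mem_filter.1 hd').2 (hUP e he) (hUP e' he'))
  have hback : ∀ x ∈ P, φ x ∈ D ∪ U → x ∈ D := by
    intro x hx hφx
    rcases mem_union.1 hφx with hD | hU
    · obtain ⟨e, he, hφe⟩ := mem_biUnion.1 hD
      exact mem_biUnion.2 ⟨e, he, mem_filter.2 ⟨mem_univ _, .cons hx (mem_filter.1 hφe).2⟩⟩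
    · exact mem_biUnion.2 ⟨φ x, hU, mem_filter.2 ⟨mem_univ _, .last hx rfl⟩⟩
  have hchain : ∀ e ∈ U, (∏ x ∈ chain e, f x (τ (φ x))) * f e (b e)
      ≤ (∏ x ∈ chain e, f x (τ x)) * f e (τ e) := by
    intro e he
    refine prod_mul_le_of_optimal hτ hτmax hτpos hφ
      (fun h => hUP e he (mem_filter.1 h).2.mem) (fun x hx => ?_) (hb e he)
    cases (mem_filter.1 hx).2 with
    | last _ h => exact .inr h
    | cons _ h => exact .inl (mem_filter.2 ⟨mem_univ _, h⟩)
  set κ : A → A := fun x => if x ∈ P \ D then φ x else x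
  refine ⟨κ, injOn_ite_of_apply_mem hφ fun x hx hφx => ?_, ?_⟩
  · obtain ⟨hxP, hxD⟩ := mem_sdiff.1 hx
    rcases mem_union.1 hφx with hP | hU
    · exact mem_sdiff.2 ⟨hP, fun hD => hxD (hback x hxP (mem_union_left _ hD))⟩
    · exact absurd (hback x hxP (mem_union_right _ hU)) hxD
  have hκ : ∏ i ∈ P \ D, f i (τ (κ i)) = ∏ i ∈ P \ D, f i (τ (φ i)) :=
    prod_congr rfl fun i hi => by simp only [κ, if_pos hi]
  have hκ' : ∀ s : Finset A, Disjoint s (P \ D) → ∏ i ∈ s, f i (τ (κ i)) = ∏ i ∈ s, f i (τ i) :=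
    fun s hs => prod_congr rfl fun i hi => by simp only [κ, if_neg (disjoint_left.1 hs hi)]
  have hf' : ∀ s : Finset A, ∀ σ : A → G, 0 ≤ ∏ i ∈ s, f i (σ i) := fun s σ =>
    prod_nonneg fun i _ => hf i (σ i)
  calc (∏ i ∈ P, f i (τ (φ i))) * ∏ i ∈ U, f i (b i)
      = (∏ i ∈ P \ D, f i (τ (φ i))) *
          ∏ e ∈ U, ((∏ x ∈ chain e, f x (τ (φ x))) * f e (b e)) := by
        rw [← prod_sdiff hDP, prod_biUnion hdisj, prod_mul_distrib, mul_assoc]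
    _ ≤ (∏ i ∈ P \ D, f i (τ (φ i))) * ∏ e ∈ U, ((∏ x ∈ chain e, f x (τ x)) * f e (τ e)) :=
        mul_le_mul_of_nonneg_left
          (prod_le_prod (fun e _ => mul_nonneg (hf' _ _) (hf _ _)) hchain) (hf' _ _)
    _ = ∏ i ∈ P ∪ U, f i (τ (κ i)) := by
        rw [prod_mul_distrib, ← prod_biUnion hdisj, ← mul_assoc, prod_union hPU,
          ← prod_sdiff hDP, hκ, hκ' D disjoint_sdiff, hκ' U (disjoint_of_subset_right
            sdiff_subset hPU.symm)]

lemma exists_partialMatching_prod_le {A G : Type*} [Fintype A] [DecidableEq A] [DecidableEq G]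
    {v : A → Finset G → ℝ} (hnn : ∀ i S, 0 ≤ v i S) (hmono : ∀ i, Monotone (v i))
    {τ : A → G} (hτ : Function.Injective τ)
    (hτmax : ∀ σ : A → G, Function.Injective σ → ∏ i, v i {σ i} ≤ ∏ i, v i {τ i})
    (hτpos : ∀ i, 0 < v i {τ i}) {π : A → G} (hπ : Function.Injective π)
    (hπτ : ∀ i, π i ∈ Set.range τ) (S : A → Finset G) {U : Finset A} {b : A → G}
    (hb : ∀ e ∈ U, b e ∉ Set.range τ) :
    ∃ ρ : A → Option G,
      (∀ i i' : A, ∀ g : G, ρ i = some g → ρ i' = some g → i = i') ∧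
      (∀ i : A, ∀ g : G, ρ i = some g → g ∈ Set.range τ) ∧
      ∏ i, (if i ∈ U then v i {b i} else max (v i (S i)) (v i {π i}))
        ≤ ∏ i, v i (S i ∪ optSet (ρ i)) := by
  set P := Uᶜ.filter fun i => v i (S i) ≤ v i {π i}
  have hPU : Disjoint P U := disjoint_left.2 fun i hi => mem_compl.1 (mem_filter.1 hi).1
  choose φ hφ using hπτ
  have hφinj : Function.Injective φ := fun i j h => hπ (by rw [← hφ i, ← hφ j, h])
  obtain ⟨κ, hκ, hle⟩ := exists_injOn_prod_le (f := fun i g => v i {g}) (fun i _ => hnn i _) hτ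
    hτmax hτpos hφinj hPU hb
  simp only [hφ] at hle
  set ρ : A → Option G := fun i => if i ∈ P ∪ U then some (τ (κ i)) else none
  have hρ : ∀ i g, ρ i = some g ↔ i ∈ P ∪ U ∧ τ (κ i) = g := fun i g => by
    simp only [ρ, Option.ite_none_right_eq_some, Option.some.injEq]
  refine ⟨ρ, fun i i' g hi hi' => ?_, fun i g hi => ⟨_, ((hρ i g).1 hi).2⟩, ?_⟩
  · obtain ⟨hiPU, rfl⟩ := (hρ i g).1 hi
    obtain ⟨hi'PU, hg⟩ := (hρ i' _).1 hi'
    exact hκ hiPU hi'PU (hτ hg).symm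
  set w : A → ℝ := fun i => if i ∈ U then v i {b i} else max (v i (S i)) (v i {π i})
  have hw : ∏ i ∈ P ∪ U, w i = (∏ i ∈ P, v i {π i}) * ∏ i ∈ U, v i {b i} := by
    rw [prod_union hPU]
    congr 1 <;> refine prod_congr rfl fun i hi => ?_
    · obtain ⟨hiU, hsp⟩ := mem_filter.1 hi
      simp [w, mem_compl.1 hiU, hsp]
    · simp [w, hi]
  have hout : ∀ i ∉ P ∪ U, w i = v i (S i ∪ optSet (ρ i)) := fun i hi => by
    have hρi : ρ i = none := if_neg hi
    rw [mem_union, not_or, mem_filter, mem_compl, not_and, not_le] at hi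
    simp [w, hρi, hi.2, (hi.1 hi.2).le, optSet]
  have hin : ∀ i ∈ P ∪ U, v i {τ (κ i)} ≤ v i (S i ∪ optSet (ρ i)) := fun i hi => by
    rw [(hρ i _).2 ⟨hi, rfl⟩]
    exact hmono i subset_union_right
  calc ∏ i, w i = (∏ i ∈ P ∪ U, w i) * ∏ i ∈ (P ∪ U)ᶜ, w i := (prod_mul_prod_compl _ _).symm
    _ ≤ (∏ i ∈ P ∪ U, v i (S i ∪ optSet (ρ i))) *
          ∏ i ∈ (P ∪ U)ᶜ, v i (S i ∪ optSet (ρ i)) := by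
        rw [hw, prod_congr rfl fun i hi => hout i (mem_compl.1 hi)]
        exact mul_le_mul_of_nonneg_right (hle.trans (prod_le_prod (fun i _ => hnn _ _) hin))
          (prod_nonneg fun i _ => hnn _ _)
    _ = ∏ i, v i (S i ∪ optSet (ρ i)) := prod_mul_prod_compl _ _

lemma multilinear_nonneg {G : Type*} [Fintype G] [DecidableEq G] {v : Finset G → ℝ}
    (hnn : ∀ S, 0 ≤ v S) {x : G → ℝ} (hx : ∀ j, 0 ≤ x j ∧ x j ≤ 1) : 0 ≤ multilinear v x :=
  sum_nonneg fun R _ => mul_nonneg (hnn R) (Multilinear.weight_nonneg hx R)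

section Sparsified

variable {G : Type*} [DecidableEq G] {y : G → ℝ} {L S : Finset G} {g : G}

lemma restr_add_indVec_add_indVec_mem_unit (hy : ∀ j, 0 ≤ y j ∧ y j ≤ 1) (hSL : Disjoint S L)
    (hgS : g ∉ S) (hgL : g ∉ L) (j : G) :
    0 ≤ (restr y L + indVec S + indVec {g}) j ∧ (restr y L + indVec S + indVec {g}) j ≤ 1 := by
  simp only [Pi.add_apply, restr, indVec, mem_singleton]
  split_ifs with hL hS hg hg hS hg hg <;> subst_vars <;> simp_all [disjoint_left]

lemma multilinear_restr_add_indVec_add_indVec_le [Fintype G] {v : Finset G → ℝ}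
    (hnn : ∀ S, 0 ≤ v S) (hmono : Monotone v) (hsub : Submodular v)
    (hy : ∀ j, 0 ≤ y j ∧ y j ≤ 1) (hSL : Disjoint S L) (hgS : g ∉ S) (hgL : g ∉ L) :
    multilinear v (restr y L + indVec S + indVec {g}) ≤ v S + v {g} + ∑ j ∈ L, y j * v {j} := by
  have hx := restr_add_indVec_add_indVec_mem_unit hy hSL hgS hgL
  have hQ : v (S ∪ {g}) ≤ v S + v {g} := by simpa using hsub.le_add_sum_singleton hnn S {g}
  have hrest : ∑ j ∈ (S ∪ {g})ᶜ, (restr y L + indVec S + indVec {g}) j * v {j}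
      ≤ ∑ j ∈ L, y j * v {j} :=
    calc ∑ j ∈ (S ∪ {g})ᶜ, (restr y L + indVec S + indVec {g}) j * v {j}
        = ∑ j ∈ (S ∪ {g})ᶜ, restr y L j * v {j} := sum_congr rfl fun j hj => by
          rw [mem_compl, mem_union, not_or] at hj
          simp [indVec, hj.1, hj.2]
      _ ≤ ∑ j, restr y L j * v {j} := sum_le_univ_sum_of_nonneg fun j =>
          mul_nonneg (by unfold restr; split_ifs <;> simp [(hy j).1]) (hnn _)
      _ = ∑ j ∈ L, y j * v {j} := by simp [restr, ite_mul, sum_ite_mem]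
  linarith [multilinear_le_add_sum hnn hmono hsub hx (S ∪ {g})]

lemma exists_multilinear_restr_add_indVec_add_indVec_le_mul [Fintype G] {v : Finset G → ℝ}
    (hnn : ∀ S, 0 ≤ v S) (hmono : Monotone v) (hsub : Submodular v)
    (hy : ∀ j, 0 ≤ y j ∧ y j ≤ 1) (hSL : Disjoint S L) (hgS : g ∉ S) (hgL : g ∉ L) {c : ℝ}
    (hc : 0 ≤ c + 1) (hmass : ∑ j ∈ L, y j ≤ c + 1) :
    ∃ b, (L.Nonempty → b ∈ L) ∧ multilinear v (restr y L + indVec S + indVec {g}) ≤ (c + 3) *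
      if L.Nonempty ∧ max (v S) (v {g}) ≤ v {b} then v {b} else max (v S) (v {g}) := by
  have hle := multilinear_restr_add_indVec_add_indVec_le hnn hmono hsub hy hSL hgS hgL
  have hmax := le_max_left (v S) (v {g})
  have hmax' := le_max_right (v S) (v {g})
  rcases L.eq_empty_or_nonempty with rfl | hne
  · refine ⟨g, fun h => absurd h Finset.not_nonempty_empty, ?_⟩
    simp only [sum_empty, Finset.not_nonempty_empty, false_and, if_false] at hle ⊢
    linarith [mul_nonneg hc ((hnn S).trans hmax)]
  obtain ⟨b, hbL, hb⟩ := exists_max_image L (fun j => v {j}) hne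
  have hY : ∑ j ∈ L, y j * v {j} ≤ (c + 1) * v {b} :=
    calc ∑ j ∈ L, y j * v {j} ≤ ∑ j ∈ L, y j * v {b} :=
          sum_le_sum fun j hj => mul_le_mul_of_nonneg_left (hb j hj) (hy j).1
      _ = (∑ j ∈ L, y j) * v {b} := (sum_mul ..).symm
      _ ≤ (c + 1) * v {b} := mul_le_mul_of_nonneg_right hmass (hnn _)
  refine ⟨b, fun _ => hbL, ?_⟩
  split_ifs with h
  · linarith [h.2]
  · have hbm : (c + 1) * v {b} ≤ (c + 1) * max (v S) (v {g}) :=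
      mul_le_mul_of_nonneg_left (not_le.1 fun h' => h ⟨hne, h'⟩).le hc
    linarith

end Sparsified

theorem integral_allocation_from_sparsified_general {A G : Type*} [Fintype A] [Fintype G]
    [DecidableEq A] [DecidableEq G] (v : A → Finset G → ℝ)
    (hnn : ∀ i S, 0 ≤ v i S) (hmono : ∀ i, Monotone (v i)) (hsub : ∀ i, Submodular (v i))
    (τ : A → G) (hτinj : Function.Injective τ)
    (hτmax : ∀ τ' : A → G, Function.Injective τ' →
      ∏ i : A, v i {τ' i} ≤ ∏ i : A, v i {τ i})
    (hτpos : ∀ i, 0 < v i {τ i})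
    (c : ℝ) (hc : 0 < c)
    (L : A → Finset G) (hL : ∀ i, L i ⊆ (Finset.univ.image τ)ᶜ)
    (S : A → Finset G) (hS : ∀ i, S i ⊆ (Finset.univ.image τ)ᶜ \ L i)
    (y : A → G → ℝ) (hy01 : ∀ i j, 0 ≤ y i j ∧ y i j ≤ 1)
    (hymass : ∀ i, ∑ j ∈ L i, y i j ≤ c + 1)
    (π : A → G) (hπinj : Function.Injective π) (hπH : ∀ i, π i ∈ Finset.univ.image τ)
    (K : ℝ)
    (hval : (∏ i : A, multilinear (v i) (restr (y i) (L i) + indVec (S i) + indVec {π i}))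
        ^ ((1 : ℝ) / Fintype.card A) ≥ K) :
    ∃ ρ : A → Option G,
      (∀ i i' : A, ∀ g : G, ρ i = some g → ρ i' = some g → i = i') ∧
      (∀ i : A, ∀ g : G, ρ i = some g → g ∈ Finset.univ.image τ) ∧
      (∏ i : A, v i (S i ∪ optSet (ρ i))) ^ ((1 : ℝ) / Fintype.card A)
        ≥ K / ((c + 3) * (c + 4)) := by
  classical
  have hH : ∀ g, g ∈ Finset.univ.image τ ↔ g ∈ Set.range τ := by simp
  have hSL : ∀ i, Disjoint (S i) (L i) :=
    fun i => disjoint_left.2 fun j hj => (mem_sdiff.1 (hS i hj)).2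
  have hπS : ∀ i, π i ∉ S i := fun i h => mem_compl.1 (mem_sdiff.1 (hS i h)).1 (hπH i)
  have hπL : ∀ i, π i ∉ L i := fun i h => mem_compl.1 (hL i h) (hπH i)
  choose b hb hV using fun i => exists_multilinear_restr_add_indVec_add_indVec_le_mul (hnn i)
    (hmono i) (hsub i) (hy01 i) (hSL i) (hπS i) (hπL i) (by linarith) (hymass i)
  set U := univ.filter fun i => (L i).Nonempty ∧ max (v i (S i)) (v i {π i}) ≤ v i {b i}
  obtain ⟨ρ, hρinj, hρH, hρ⟩ := exists_partialMatching_prod_le hnn hmono hτinj hτmax hτpos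
    hπinj (fun i => (hH _).1 (hπH i)) S (U := U) (b := b) fun e he =>
      (hH _).not.1 (mem_compl.1 (hL e (hb e (mem_filter.1 he).2.1)))
  refine ⟨ρ, hρinj, fun i g hg => (hH g).2 (hρH i g hg), ?_⟩
  have hx := fun i => restr_add_indVec_add_indVec_mem_unit (hy01 i) (hSL i) (hπS i) (hπL i)
  have hprod : ∏ i, multilinear (v i) (restr (y i) (L i) + indVec (S i) + indVec {π i})
      ≤ (c + 3) ^ Fintype.card A * ∏ i, v i (S i ∪ optSet (ρ i)) :=
    calc _ ≤ ∏ i, (c + 3) * if i ∈ U then v i {b i} else max (v i (S i)) (v i {π i}) :=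
          prod_le_prod (fun i _ => multilinear_nonneg (hnn i) (hx i)) fun i _ => by
            simpa only [U, mem_filter, mem_univ, true_and] using hV i
      _ ≤ _ := by
        rw [prod_mul_distrib, prod_const, card_univ]
        exact mul_le_mul_of_nonneg_left hρ (by positivity)
  exact div_le_rpow_one_div_of_le_pow_mul (prod_nonneg fun i _ => multilinear_nonneg (hnn i) (hx i))
    (prod_nonneg fun i _ => hnn i _) (by linarith) (by nlinarith) hprod hval

/-- from a matching `π` achieving value `K` with the sparsified fractional
solution `y^{(s)}`, one obtains a partial matching `ρ` such that the integral allocation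
`S_i ∪ {ρ(i)}` achieves Nash Social Welfare at least `K/((c+3)(c+4))`. -/
theorem integral_allocation_from_sparsified {A G : Type*} [Fintype A] [Fintype G]
    [DecidableEq A] [DecidableEq G] (v : A → Finset G → ℝ)
    (hnn : ∀ i S, 0 ≤ v i S) (hmono : ∀ i, Monotone (v i)) (hsub : ∀ i, Submodular (v i))
    (hempty : ∀ i, v i ∅ = 0)
    (τ : A → G) (hτinj : Function.Injective τ)
    (hτmax : ∀ τ' : A → G, Function.Injective τ' →
      ∏ i : A, v i {τ' i} ≤ ∏ i : A, v i {τ i})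
    (hτpos : ∀ i, 0 < v i {τ i})
    (c : ℝ) (hc : 0 < c)
    (L : A → Finset G) (hL : ∀ i, L i ⊆ (Finset.univ.image τ)ᶜ)
    (S : A → Finset G) (hS : ∀ i, S i ⊆ (Finset.univ.image τ)ᶜ \ L i)
    (y : A → G → ℝ) (hy01 : ∀ i j, 0 ≤ y i j ∧ y i j ≤ 1)
    (hyH : ∀ i, ∀ j ∈ Finset.univ.image τ, y i j = 0)
    (hymass : ∀ i, ∑ j ∈ L i, y i j ≤ c + 1)
    (π : A → G) (hπinj : Function.Injective π) (hπH : ∀ i, π i ∈ Finset.univ.image τ)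
    (K : ℝ) (hK : 0 < K)
    (hval : (∏ i : A, multilinear (v i) (restr (y i) (L i) + indVec (S i) + indVec {π i}))
        ^ ((1 : ℝ) / Fintype.card A) ≥ K) :
    ∃ ρ : A → Option G,
      (∀ i i' : A, ∀ g : G, ρ i = some g → ρ i' = some g → i = i') ∧
      (∀ i : A, ∀ g : G, ρ i = some g → g ∈ Finset.univ.image τ) ∧
      (∏ i : A, v i (S i ∪ optSet (ρ i))) ^ ((1 : ℝ) / Fintype.card A)
        ≥ K / ((c + 3) * (c + 4)) :=
  integral_allocation_from_sparsified_general v hnn hmono hsub τ hτinj hτmax hτpos c hc L hL S hS y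
    hy01 hymass π hπinj hπH K hval
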